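/- Let F be a field and f(t) = t^n + c_{n-1}t^{n-1} + ... + c_0. Let d_1,...,d_{n-1} ∈ F be arbitrary, set d_n = -c_{n-1} - d_1 - ... - d_{n-1}, and define b_k = -∑_{i=k-1}^{n} c_i · h_{i-k+1}(d_1,...,d_k) for k = 1,...,n-1, where c_n = 1 and h_r denotes the complete homogeneous symmetric polynomial of degree r. Then the n×n matrix A with diagonal (d_1,...,d_n), subdiagonal entries 1, last column (b_1,...,b_{n-1},d_n), and zeros elsewhere satisfies det(tI_n - A) = f(t). -/

import Mathlib

/-
Write `p_k = (t - d_1) ⋯ (t - d_k)`. Expanding `det (t - A)` along its first row gives the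
recursion `χ_A = (t - d_1) χ_{A'} - b_1`, where `A'` is the matrix of the same shape built from
`d_2, …, d_n` and `b_2, …, b_{n-1}`; hence `χ_A = p_n - ∑_{k<n} b_k p_{k-1}`.
On the other hand `t ^ m = ∑_{k ≤ m} h_{m-k}(d_1, …, d_{k+1}) p_k`, so the coefficient of `p_{k-1}`
in `f` is `∑_{i ≥ k-1} c_i h_{i-k+1}(d_1, …, d_k)`: it is `1` for `k = n + 1`,
`c_{n-1} + d_1 + ⋯ + d_n = 0` for `k = n`, and `-b_k` for `k < n`.
-/

open Polynomial

/-- `hfun d r k` is the complete homogeneous symmetric polynomial of degree `r`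
evaluated at the first `k` values `d 0, …, d (k-1)`:
`h_r(d_1, …, d_k)` with one-indexed variables `d_i = d (i-1)`. -/
def hfun {F : Type*} [CommRing F] (d : ℕ → F) : ℕ → ℕ → F
  | 0, _ => 1
  | _ + 1, 0 => 0
  | r + 1, k + 1 => hfun d (r + 1) k + d k * hfun d r (k + 1)
  termination_by r k => (r, k)

/-- The matrix with diagonal `d 0, …, d (n-1)`, subdiagonal entries `1`,
last column entries `b` above the diagonal, and zeros elsewhere. -/
def matA {F : Type*} [Field F] (n : ℕ) (d : ℕ → F) (b : Fin (n - 1) → F) :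
    Matrix (Fin n) (Fin n) F :=
  Matrix.of fun i j =>
    if i = j then d i
    else if (i : ℕ) = (j : ℕ) + 1 then 1
    else if (j : ℕ) = n - 1 then (if h : (i : ℕ) < n - 1 then b ⟨i, h⟩ else 0)
    else 0

open Finset Lagrange

section CompleteHomogeneous

variable {R : Type*} [CommRing R] (d : ℕ → R)

lemma hfun_zero (k : ℕ) : hfun d 0 k = 1 := by rw [hfun]

lemma hfun_succ_zero (r : ℕ) : hfun d (r + 1) 0 = 0 := by rw [hfun]

lemma hfun_succ_succ (r k : ℕ) :
    hfun d (r + 1) (k + 1) = hfun d (r + 1) k + d k * hfun d r (k + 1) := by rw [hfun]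

lemma hfun_one (k : ℕ) : hfun d 1 k = ∑ i ∈ range k, d i := by
  induction k with
  | zero => exact hfun_succ_zero d 0
  | succ k ih => rw [hfun_succ_succ, ih, hfun_zero, sum_range_succ, mul_one]

lemma X_mul_nodal_range (k : ℕ) :
    X * nodal (range k) d = nodal (range (k + 1)) d + C (d k) * nodal (range k) d := by
  rw [nodal, nodal, prod_range_succ]
  ring

theorem X_pow_eq_sum_hfun_mul_nodal (m : ℕ) :
    (X : R[X]) ^ m = ∑ k ∈ range (m + 1), C (hfun d (m - k) (k + 1)) * nodal (range k) d := by
  induction m with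
  | zero => simp [hfun_zero]
  | succ m ih =>
    have hsplit : ∀ k ∈ range (m + 1), hfun d (m + 1 - k) (k + 1)
        = hfun d (m + 1 - k) k + d k * hfun d (m - k) (k + 1) := fun k hk => by
      rw [Nat.sub_add_comm (by simpa [Nat.lt_succ_iff] using hk), hfun_succ_succ]
    have hshift : ∑ k ∈ range (m + 2), C (hfun d (m + 1 - k) k) * nodal (range k) d
        = ∑ k ∈ range (m + 1), C (hfun d (m - k) (k + 1)) * nodal (range (k + 1)) d := by
      rw [sum_range_succ', Nat.sub_zero, hfun_succ_zero, map_zero, zero_mul, add_zero]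
      simp only [Nat.add_sub_add_right]
    calc (X : R[X]) ^ (m + 1)
        = ∑ k ∈ range (m + 1), C (hfun d (m - k) (k + 1)) * (X * nodal (range k) d) := by
          rw [pow_succ', ih, mul_sum]
          exact sum_congr rfl fun k _ => by ring
      _ = ∑ k ∈ range (m + 2), C (hfun d (m + 1 - k) k) * nodal (range k) d
          + ∑ k ∈ range (m + 1), C (d k * hfun d (m - k) (k + 1)) * nodal (range k) d := by
          simp only [X_mul_nodal_range, hshift, mul_add, sum_add_distrib, map_mul]
          congr 1
          exact sum_congr rfl fun k _ => by ring
      _ = ∑ k ∈ range (m + 2), C (hfun d (m + 1 - k) (k + 1)) * nodal (range k) d := by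
          rw [sum_range_succ, sum_range_succ _ (m + 1), Nat.sub_self, hfun_zero, hfun_zero,
            add_right_comm, ← sum_add_distrib]
          congr 1
          refine sum_congr rfl fun k hk => ?_
          rw [hsplit k hk, map_add, add_mul]

theorem sum_C_mul_X_pow_eq_sum_mul_nodal (c : ℕ → R) (n : ℕ) :
    ∑ i ∈ range (n + 1), C (c i) * X ^ i
      = ∑ k ∈ range (n + 1),
          C (∑ i ∈ Icc k n, c i * hfun d (i - k) (k + 1)) * nodal (range k) d := by
  simp_rw [X_pow_eq_sum_hfun_mul_nodal d, mul_sum, map_sum, sum_mul, map_mul, mul_assoc]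
  exact sum_comm' fun i k => by simp only [mem_range, mem_Icc]; omega

end CompleteHomogeneous

section Charpoly

variable {F : Type*} [Field F]

lemma matA_submatrix_succ_succ (n : ℕ) (d : ℕ → F) (b : Fin (n + 1) → F) :
    (matA (n + 2) d b).submatrix Fin.succ Fin.succ
      = matA (n + 1) (fun i => d (i + 1)) (fun k => b k.succ) := by
  ext i j
  simp only [matA, Matrix.submatrix_apply, Matrix.of_apply, Fin.succ_inj, Fin.val_succ,
    Nat.add_sub_cancel]
  split_ifs <;> first | rfl | (exfalso; omega)

lemma charmatrix_submatrix_succ_succ {R : Type*} [CommRing R] {n : ℕ}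
    (M : Matrix (Fin (n + 1)) (Fin (n + 1)) R) :
    M.charmatrix.submatrix Fin.succ Fin.succ = (M.submatrix Fin.succ Fin.succ).charmatrix := by
  ext i j
  simp [Matrix.charmatrix_apply, Matrix.diagonal_apply, Fin.succ_inj]

lemma charmatrix_matA_zero_apply {n : ℕ} (d : ℕ → F) (b : Fin (n + 1) → F) (j : Fin (n + 2)) :
    (matA (n + 2) d b).charmatrix 0 j
      = if j = 0 then X - C (d 0) else if j = Fin.last (n + 1) then -C (b 0) else 0 := by
  by_cases h0 : j = 0
  · subst h0
    simp [matA]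
  · rw [Matrix.charmatrix_apply_ne _ _ _ (Ne.symm h0), if_neg h0]
    have hsub : ((0 : Fin (n + 2)) : ℕ) ≠ j + 1 := by simp
    have hlast : (j : ℕ) = n + 2 - 1 ↔ j = Fin.last (n + 1) := by simp [Fin.ext_iff]
    simp only [matA, Matrix.of_apply, if_neg (Ne.symm h0), if_neg hsub, hlast]
    split_ifs <;> simp_all

-- Deleting the first row and the last column of `t - A` leaves an upper triangular matrix
-- with `-1` on the diagonal.
lemma det_charmatrix_matA_submatrix_succ_castSucc {n : ℕ} (d : ℕ → F) (b : Fin (n + 1) → F) :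
    ((matA (n + 2) d b).charmatrix.submatrix Fin.succ Fin.castSucc).det = (-1) ^ (n + 1) := by
  have hentry : ∀ i j : Fin (n + 1), j ≤ i →
      (matA (n + 2) d b).charmatrix i.succ j.castSucc = if i = j then -1 else 0 := by
    intro i j hji
    have hne : i.succ ≠ j.castSucc := by simp [Fin.ext_iff]; omega
    have hlast : (j : ℕ) ≠ n + 2 - 1 := by omega
    simp only [Matrix.charmatrix_apply_ne _ _ _ hne, matA, Matrix.of_apply, if_neg hne,
      Fin.val_succ, Fin.val_castSucc, add_left_inj, Fin.val_inj, if_neg hlast]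
    split_ifs <;> simp
  rw [Matrix.det_of_isUpperTriangular fun i j (hij : j < i) => by
    rw [Matrix.submatrix_apply, hentry i j hij.le, if_neg (ne_of_gt hij)]]
  simp [hentry]

lemma charpoly_matA_succ_succ (n : ℕ) (d : ℕ → F) (b : Fin (n + 1) → F) :
    (matA (n + 2) d b).charpoly
      = (X - C (d 0)) * (matA (n + 1) (fun i => d (i + 1)) (fun k => b k.succ)).charpoly
        - C (b 0) := by
  have hpair : ({0, Fin.last (n + 1)} : Finset (Fin (n + 2))) ⊆ univ := subset_univ _
  have h0last : (0 : Fin (n + 2)) ≠ Fin.last (n + 1) := Fin.last_pos.ne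
  rw [Matrix.charpoly, Matrix.det_succ_row_zero, ← sum_subset hpair, sum_pair h0last]
  · simp only [charmatrix_matA_zero_apply, ↓reduceIte, if_neg h0last.symm,
      Fin.succAbove_zero, Fin.succAbove_last, charmatrix_submatrix_succ_succ,
      matA_submatrix_succ_succ, det_charmatrix_matA_submatrix_succ_castSucc, Fin.val_zero,
      Fin.val_last, pow_zero, one_mul]
    have hsign : (-1 : F[X]) ^ (n + 1) * (-1) ^ (n + 1) = 1 := by rw [← mul_pow]; norm_num
    rw [Matrix.charpoly]
    linear_combination (-C (b 0)) * hsign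
  · intro j _ hj
    simp only [mem_insert, mem_singleton, not_or] at hj
    simp [charmatrix_matA_zero_apply, hj.1, hj.2]

theorem charpoly_matA (n : ℕ) (d : ℕ → F) (b : Fin n → F) :
    (matA (n + 1) d b).charpoly
      = nodal (range (n + 1)) d - ∑ k : Fin n, C (b k) * nodal (range k) d := by
  induction n generalizing d with
  | zero => simp [Matrix.charpoly, matA, nodal]
  | succ n ih =>
    have hnodal : ∀ k, nodal (range (k + 1)) d
        = (X - C (d 0)) * nodal (range k) (fun i => d (i + 1)) :=
      fun k => by rw [nodal, nodal, prod_range_succ', mul_comm]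
    rw [charpoly_matA_succ_succ, ih, Fin.sum_univ_succ, hnodal, mul_sub, mul_sum]
    simp only [Fin.val_succ, hnodal, Fin.val_zero, range_zero, nodal_empty, mul_one,
      mul_left_comm (X - C (d 0))]
    ring

end Charpoly

theorem stmt4 {F : Type*} [Field F] (n : ℕ) (hn : 1 ≤ n)
    (c : ℕ → F) (hc : c n = 1) (d : ℕ → F)
    (hd : d (n - 1) = -c (n - 1) - ∑ i ∈ Finset.range (n - 1), d i)
    (b : Fin (n - 1) → F)
    (hb : ∀ k : Fin (n - 1),
      b k = -∑ i ∈ Finset.Icc (k : ℕ) n, c i * hfun d (i - (k : ℕ)) ((k : ℕ) + 1)) :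
    (matA n d b).charpoly = ∑ i ∈ Finset.range (n + 1), C (c i) * X ^ i := by
  obtain ⟨m, rfl⟩ : ∃ m, n = m + 1 := ⟨n - 1, by omega⟩
  have hcoeff_top : ∑ i ∈ Icc (m + 1) (m + 1), c i * hfun d (i - (m + 1)) (m + 1 + 1) = 1 := by
    simp [hfun_zero, hc]
  have hcoeff_next : ∑ i ∈ Icc m (m + 1), c i * hfun d (i - m) (m + 1) = 0 := by
    rw [← insert_Icc_add_one_left_eq_Icc (by omega), sum_insert (by simp), Icc_self, sum_singleton,
      Nat.sub_self, Nat.add_sub_cancel_left, hfun_zero, hfun_one, hc, sum_range_succ]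
    simp only [Nat.add_sub_cancel] at hd
    rw [hd]
    ring
  have hcoeff_low : ∀ k : Fin m,
      C (∑ i ∈ Icc (k : ℕ) (m + 1), c i * hfun d (i - k) (k + 1)) = -C (b k) := fun k => by
    rw [hb k, map_neg, neg_neg]
  rw [charpoly_matA, sum_C_mul_X_pow_eq_sum_mul_nodal d, sum_range_succ, sum_range_succ,
    sum_range, hcoeff_top, hcoeff_next]
  simp only [hcoeff_low, map_one, one_mul, map_zero, zero_mul, add_zero, neg_mul, sum_neg_distrib]
  ring
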